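/- For any symplectic vector space W and a curve of Lagrangian subspaces given by the frame in the structural equation (with E_a' = E_b, E_b' = E_c, E_c' = F_c and the F-equations with curvature matrices R_t(·,·)), the span Λ(t) = span{E_a(t), E_b(t), E_c(t)} is Lagrangian at every time t provided it is Lagrangian at t = 0 and the frame is a Darboux frame (σ(E_i, E_j) = σ(F_i, F_j) = 0, σ(F_i, E_j) = δ_{ij}) at t = 0: the Darboux relations are preserved under the flow of the structural equation when R_t(c,c) is symmetric. -/

import Mathlib

/-!
Collect the frame into one vector `V t` indexed by `(Fin 2 ⊕ Fin m) ⊕ (Fin 2 ⊕ Fin m)`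
(`E`'s first, then `F`'s). The structural equation reads `V' = H V` with `H t` of the block form
`[[N, B], [-S, -Nᵀ]]`, `B` and `S` symmetric, i.e. `H t ∈ sp`, and the Darboux relations say that
the Gram matrix `σ (V t) (V t)` is the standard `J`.

Nothing is assumed about the regularity of the curvature in `t`, so ODE uniqueness is unavailable;
Wronskians replace it. For two solutions `x, y` of the linear system `x' = H x`, the pairing
`x ⬝ J y` is constant. The columns of `s ↦ σ (V s) (V t)` and the rows of `K s = σ (V 0) (V s)`
are such solutions, whence `σ (V s) (V t)ᵀ * J * (K s)ᵀ = (K t)ᵀ`. At `t = 0` this says that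
`K s` is symplectic, hence invertible; at `s = t` it then gives `σ (V t) (V t)ᵀ * J = 1`, that is
`σ (V t) (V t) = J`.
-/

/-- The Darboux-frame relations for the moving frame
`(E_a, E_b, E_c, F_a, F_b, F_c)` with respect to a symplectic form `σ`:
the `E`'s span an isotropic subspace, the `F`'s span an isotropic subspace, and
`σ(F_i, E_j) = δ_{ij}`. -/
def IsDarbouxFrame {W : Type*} [AddCommGroup W] [Module ℝ W] {m : ℕ}
    (σ : LinearMap.BilinForm ℝ W)
    (Ea Eb Fa Fb : W) (Ec Fc : Fin m → W) : Prop :=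
  σ Ea Eb = 0 ∧ (∀ i, σ Ea (Ec i) = 0) ∧ (∀ i, σ Eb (Ec i) = 0) ∧
    (∀ i j, σ (Ec i) (Ec j) = 0) ∧
  σ Fa Fb = 0 ∧ (∀ i, σ Fa (Fc i) = 0) ∧ (∀ i, σ Fb (Fc i) = 0) ∧
    (∀ i j, σ (Fc i) (Fc j) = 0) ∧
  σ Fa Ea = 1 ∧ σ Fa Eb = 0 ∧ (∀ i, σ Fa (Ec i) = 0) ∧
  σ Fb Ea = 0 ∧ σ Fb Eb = 1 ∧ (∀ i, σ Fb (Ec i) = 0) ∧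
  (∀ i, σ (Fc i) Ea = 0) ∧ (∀ i, σ (Fc i) Eb = 0) ∧
  (∀ i j, σ (Fc i) (Ec j) = if i = j then 1 else 0)

open Matrix

section LinearSystem

variable {κ : Type*} [Fintype κ]

theorem HasDerivAt.dotProduct {x y : ℝ → κ → ℝ} {x' y' : κ → ℝ} {t : ℝ}
    (hx : HasDerivAt x x' t) (hy : HasDerivAt y y' t) :
    HasDerivAt (fun s => x s ⬝ᵥ y s) (x' ⬝ᵥ y t + x t ⬝ᵥ y') t := by
  simp only [_root_.dotProduct, ← Finset.sum_add_distrib]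
  exact HasDerivAt.fun_sum fun i _ => (hasDerivAt_pi.1 hx i).mul (hasDerivAt_pi.1 hy i)

theorem HasDerivAt.mulVec (M : Matrix κ κ ℝ) {y : ℝ → κ → ℝ} {y' : κ → ℝ} {t : ℝ}
    (hy : HasDerivAt y y' t) : HasDerivAt (fun s => M *ᵥ y s) (M *ᵥ y') t :=
  (mulVecLin M).toContinuousLinearMap.hasFDerivAt.comp_hasDerivAt t hy

theorem dotProduct_mulVec_eq_of_isSkewAdjoint {J : Matrix κ κ ℝ} {H : ℝ → Matrix κ κ ℝ}
    (hH : ∀ t, J.IsSkewAdjoint (H t)) {x y : ℝ → κ → ℝ}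
    (hx : ∀ t, HasDerivAt x (H t *ᵥ x t) t) (hy : ∀ t, HasDerivAt y (H t *ᵥ y t) t)
    (t : ℝ) : x t ⬝ᵥ (J *ᵥ y t) = x 0 ⬝ᵥ (J *ᵥ y 0) := by
  have hderiv : ∀ s, HasDerivAt (fun s => x s ⬝ᵥ (J *ᵥ y s)) 0 s := by
    intro s
    convert (hx s).dotProduct ((hy s).mulVec J) using 1
    have hskew : (H s)ᵀ * J = J * -H s := hH s
    rw [← vecMul_transpose, ← dotProduct_mulVec, mulVec_mulVec, mulVec_mulVec, ← dotProduct_add,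
      ← add_mulVec, hskew, mul_neg, neg_add_cancel, zero_mulVec, dotProduct_zero]
  exact is_const_of_deriv_eq_zero (fun s => (hderiv s).differentiableAt)
    (fun s => (hderiv s).deriv) t 0

theorem Matrix.mul_mul_apply_eq_dotProduct_mulVec (P J Q : Matrix κ κ ℝ) (v u : κ) :
    (P * J * Q) v u = P v ⬝ᵥ (J *ᵥ Qᵀ u) := by
  rw [Matrix.mul_assoc, mul_apply']; rfl

end LinearSystem

theorem Matrix.fromBlocks_mem_sp {l R : Type*} [Fintype l] [DecidableEq l] [CommRing R]
    (N B C : Matrix l l R) (hB : Bᵀ = B) (hC : Cᵀ = C) :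
    fromBlocks N B C (-Nᵀ) ∈ LieAlgebra.Symplectic.sp l R := by
  rw [LieAlgebra.Symplectic.sp, mem_skewAdjointMatricesLieSubalgebra,
    mem_skewAdjointMatricesSubmodule, Matrix.IsSkewAdjoint, Matrix.IsAdjointPair, J,
    fromBlocks_transpose, fromBlocks_neg, fromBlocks_multiply, fromBlocks_multiply]
  simp [hB, hC]

def pairingMatrix {W κ : Type*} [AddCommGroup W] [Module ℝ W] (σ : LinearMap.BilinForm ℝ W)
    (v w : κ → W) : Matrix κ κ ℝ :=
  Matrix.of fun i j => σ (v i) (w j)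

section MovingFrame

variable {W : Type*} [NormedAddCommGroup W] [NormedSpace ℝ W] [FiniteDimensional ℝ W]

theorem hasDerivAt_linearMap_comp_frame {κ : Type*} [Fintype κ] {H : ℝ → Matrix κ κ ℝ}
    {V : ℝ → κ → W} (hV : ∀ t i, HasDerivAt (fun s => V s i) (∑ j, H t i j • V t j) t)
    (L : W →ₗ[ℝ] ℝ) (t : ℝ) :
    HasDerivAt (fun s i => L (V s i)) (H t *ᵥ fun i => L (V t i)) t := by
  refine hasDerivAt_pi.2 fun i => ?_
  have := L.toContinuousLinearMap.hasFDerivAt.comp_hasDerivAt t (hV t i)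
  simpa [Function.comp_def, mulVec, _root_.dotProduct] using this

theorem pairingMatrix_eq_J_of_mem_sp {l : Type*} [Fintype l] [DecidableEq l]
    (σ : LinearMap.BilinForm ℝ W) (hσ : ∀ v w, σ v w = -σ w v)
    {H : ℝ → Matrix (l ⊕ l) (l ⊕ l) ℝ} (hH : ∀ t, H t ∈ LieAlgebra.Symplectic.sp l ℝ)
    {V : ℝ → l ⊕ l → W} (hV : ∀ t i, HasDerivAt (fun s => V s i) (∑ j, H t i j • V t j) t)
    (h0 : pairingMatrix σ (V 0) (V 0) = J l ℝ) (t : ℝ) :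
    pairingMatrix σ (V t) (V t) = J l ℝ := by
  have hskew : ∀ s, (J l ℝ).IsSkewAdjoint (H s) := fun s =>
    (mem_skewAdjointMatricesSubmodule _ _).1 ((mem_skewAdjointMatricesLieSubalgebra _ _).1 (hH s))
  set M : ℝ → ℝ → Matrix (l ⊕ l) (l ⊕ l) ℝ := fun s t => pairingMatrix σ (V s) (V t)
  have hM00 : M 0 0 = J l ℝ := h0
  have hM_transpose : ∀ s t, (M s t)ᵀ = -M t s := fun s t => by
    ext i j; exact hσ _ _
  have hwronskian : ∀ s t, (M s t)ᵀ * J l ℝ * (M 0 s)ᵀ = (M 0 t)ᵀ := by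
    intro s t
    ext v u
    rw [Matrix.mul_mul_apply_eq_dotProduct_mulVec]
    have hconst := dotProduct_mulVec_eq_of_isSkewAdjoint hskew
      (hasDerivAt_linearMap_comp_frame hV (σ.flip (V t v)))
      (hasDerivAt_linearMap_comp_frame hV (σ (V 0 u))) s
    calc _ = ((M 0 t)ᵀ * J l ℝ * (M 0 0)ᵀ) v u :=
          hconst.trans (Matrix.mul_mul_apply_eq_dotProduct_mulVec (M 0 t)ᵀ _ (M 0 0)ᵀ v u).symm
      _ = (M 0 t)ᵀ v u := by
          rw [hM00, Matrix.mul_assoc, J_transpose, mul_neg, J_squared, neg_neg, mul_one]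
  have hsymplectic : M 0 t ∈ symplecticGroup l ℝ := by
    have h := hwronskian t 0
    rw [hM_transpose, hM00, J_transpose, neg_mul, neg_mul, neg_inj] at h
    exact SymplecticGroup.mem_iff.2 h
  have hunit : IsUnit (M 0 t)ᵀ := by
    rw [isUnit_transpose, isUnit_iff_isUnit_det]
    exact SymplecticGroup.symplectic_det hsymplectic
  have hGJ : (M t t)ᵀ * J l ℝ = 1 :=
    hunit.mul_left_inj.1 (by rw [one_mul]; exact hwronskian t t)
  rw [hM_transpose, neg_mul, neg_eq_iff_eq_neg, ← J_squared] at hGJ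
  exact ((isUnit_iff_isUnit_det _).2 (isUnit_det_J l ℝ)).mul_left_inj.1 hGJ

end MovingFrame

section StructuralEquation

variable {m : ℕ}

def frameVec {W : Type*} (Ea Eb Fa Fb : W) (Ec Fc : Fin m → W) :
    (Fin 2 ⊕ Fin m) ⊕ (Fin 2 ⊕ Fin m) → W :=
  Sum.elim (Sum.elim ![Ea, Eb] Ec) (Sum.elim ![Fa, Fb] Fc)

/-- Row `i` lists the coefficients, on the frame `frameVec`, of the derivative of its `i`-th
vector. -/
def structuralMatrix (Raa Rbb : ℝ) (Rac Rbc : Fin m → ℝ) (Rcc : Matrix (Fin m) (Fin m) ℝ) :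
    Matrix ((Fin 2 ⊕ Fin m) ⊕ (Fin 2 ⊕ Fin m)) ((Fin 2 ⊕ Fin m) ⊕ (Fin 2 ⊕ Fin m)) ℝ :=
  let N : Matrix (Fin 2 ⊕ Fin m) (Fin 2 ⊕ Fin m) ℝ := fromBlocks !![0, 1; 0, 0] 0 0 0
  let B : Matrix (Fin 2 ⊕ Fin m) (Fin 2 ⊕ Fin m) ℝ := fromBlocks !![0, 0; 0, 1] 0 0 1
  let S : Matrix (Fin 2 ⊕ Fin m) (Fin 2 ⊕ Fin m) ℝ :=
    fromBlocks !![Raa, 0; 0, Rbb] (of ![Rac, Rbc]) (of ![Rac, Rbc])ᵀ Rccᵀ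
  fromBlocks N B (-S) (-Nᵀ)

theorem structuralMatrix_mem_sp {Raa Rbb : ℝ} {Rac Rbc : Fin m → ℝ}
    {Rcc : Matrix (Fin m) (Fin m) ℝ} (hRcc : Rcc.IsSymm) :
    structuralMatrix Raa Rbb Rac Rbc Rcc ∈ LieAlgebra.Symplectic.sp (Fin 2 ⊕ Fin m) ℝ := by
  refine Matrix.fromBlocks_mem_sp _ _ _ ?_ ?_
  · rw [fromBlocks_transpose]
    simp [← Matrix.ext_iff, Fin.forall_fin_two]
  · rw [transpose_neg, fromBlocks_transpose]
    simp [← Matrix.ext_iff, Fin.forall_fin_two, hRcc.eq]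

theorem hasDerivAt_frameVec {W : Type*} [NormedAddCommGroup W] [NormedSpace ℝ W]
    {Ea Eb Fa Fb : ℝ → W} {Ec Fc : ℝ → Fin m → W} {Raa Rbb : ℝ → ℝ} {Rac Rbc : ℝ → Fin m → ℝ}
    {Rcc : ℝ → Matrix (Fin m) (Fin m) ℝ}
    (hEa : ∀ t, HasDerivAt Ea (Eb t) t)
    (hEb : ∀ t, HasDerivAt Eb (Fb t) t)
    (hEc : ∀ i, ∀ t, HasDerivAt (fun s => Ec s i) (Fc t i) t)
    (hFa : ∀ t, HasDerivAt Fa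
      (-(Raa t • Ea t) - ∑ i, Rac t i • Ec t i) t)
    (hFb : ∀ t, HasDerivAt Fb
      (-Fa t - Rbb t • Eb t - ∑ i, Rbc t i • Ec t i) t)
    (hFc : ∀ j, ∀ t, HasDerivAt (fun s => Fc s j)
      (-(Rac t j • Ea t) - Rbc t j • Eb t - ∑ i, Rcc t i j • Ec t i) t)
    (t : ℝ) (i : (Fin 2 ⊕ Fin m) ⊕ (Fin 2 ⊕ Fin m)) :
    HasDerivAt (fun s => frameVec (Ea s) (Eb s) (Fa s) (Fb s) (Ec s) (Fc s) i)
      (∑ j, structuralMatrix (Raa t) (Rbb t) (Rac t) (Rbc t) (Rcc t) i j •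
        frameVec (Ea t) (Eb t) (Fa t) (Fb t) (Ec t) (Fc t) j) t := by
  rcases i with (p | i) | (p | i) <;> (try fin_cases p) <;>
    simp [frameVec, structuralMatrix, Fintype.sum_sum_type, one_apply]
  · exact hEa t
  · exact hEb t
  · exact hEc i t
  · convert hFa t using 1; abel
  · convert hFb t using 1; abel
  · convert hFc i t using 1; abel

theorem isDarbouxFrame_iff_pairingMatrix_eq_J {W : Type*} [AddCommGroup W] [Module ℝ W]
    (σ : LinearMap.BilinForm ℝ W) (hσ : ∀ v w, σ v w = -σ w v)
    (Ea Eb Fa Fb : W) (Ec Fc : Fin m → W) :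
    IsDarbouxFrame σ Ea Eb Fa Fb Ec Fc ↔
      pairingMatrix σ (frameVec Ea Eb Fa Fb Ec Fc) (frameVec Ea Eb Fa Fb Ec Fc) =
        J (Fin 2 ⊕ Fin m) ℝ := by
  have hself : ∀ v, σ v v = 0 := fun v => self_eq_neg.1 (hσ v v)
  rw [← Matrix.ext_iff]
  simp only [Sum.forall, Fin.forall_fin_two, pairingMatrix, frameVec, J, of_apply, Sum.elim_inl,
    Sum.elim_inr, fromBlocks_apply₁₁, fromBlocks_apply₁₂, fromBlocks_apply₂₁, fromBlocks_apply₂₂,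
    Matrix.one_apply, Matrix.zero_apply, Matrix.neg_apply, Sum.inr.injEq, Sum.inl.injEq,
    cons_val_zero, cons_val_one, cons_val_fin_one, hself, hσ Eb Ea, hσ Fb Fa, hσ Ea Fa, hσ Ea Fb,
    hσ Eb Fa, hσ Eb Fb, hσ (Ec _) Ea, hσ (Ec _) Eb, hσ (Fc _) Fa, hσ (Fc _) Fb, hσ Ea (Fc _),
    hσ Eb (Fc _), hσ (Ec _) Fa, hσ (Ec _) Fb, hσ (Ec _) (Fc _), neg_eq_zero, neg_inj,
    forall_and, IsDarbouxFrame, if_true, reduceCtorEq, one_ne_zero, zero_ne_one, if_false,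
    true_and, and_true]
  have hswap : (∀ i j, σ (Fc j) (Ec i) = if i = j then (1 : ℝ) else 0) ↔
      ∀ i j, σ (Fc i) (Ec j) = if i = j then (1 : ℝ) else 0 := by
    rw [forall_comm]; simp only [eq_comm]
  rw [hswap]
  tauto

end StructuralEquation

theorem darboux_frame_preserved_general {W : Type*} [NormedAddCommGroup W]
    [NormedSpace ℝ W] [FiniteDimensional ℝ W] {m : ℕ}
    (σ : LinearMap.BilinForm ℝ W)
    (hσ_alt : ∀ v w : W, σ v w = -σ w v)
    (Ea Eb Fa Fb : ℝ → W) (Ec Fc : ℝ → Fin m → W)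
    (Raa Rbb : ℝ → ℝ) (Rac Rbc : ℝ → Fin m → ℝ)
    (Rcc : ℝ → Matrix (Fin m) (Fin m) ℝ)
    (hRccSymm : ∀ t, (Rcc t).IsSymm)
    (hEa : ∀ t, HasDerivAt Ea (Eb t) t)
    (hEb : ∀ t, HasDerivAt Eb (Fb t) t)
    (hEc : ∀ i, ∀ t, HasDerivAt (fun s => Ec s i) (Fc t i) t)
    (hFa : ∀ t, HasDerivAt Fa
      (-(Raa t • Ea t) - ∑ i, Rac t i • Ec t i) t)
    (hFb : ∀ t, HasDerivAt Fb
      (-Fa t - Rbb t • Eb t - ∑ i, Rbc t i • Ec t i) t)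
    (hFc : ∀ j, ∀ t, HasDerivAt (fun s => Fc s j)
      (-(Rac t j • Ea t) - Rbc t j • Eb t - ∑ i, Rcc t i j • Ec t i) t)
    (h0 : IsDarbouxFrame σ (Ea 0) (Eb 0) (Fa 0) (Fb 0) (Ec 0) (Fc 0)) :
    ∀ t : ℝ, IsDarbouxFrame σ (Ea t) (Eb t) (Fa t) (Fb t) (Ec t) (Fc t) := by
  intro t
  rw [isDarbouxFrame_iff_pairingMatrix_eq_J σ hσ_alt] at h0 ⊢
  exact pairingMatrix_eq_J_of_mem_sp σ hσ_alt (fun s => structuralMatrix_mem_sp (hRccSymm s))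
    (hasDerivAt_frameVec hEa hEb hEc hFa hFb hFc) h0 t

/-- For a symplectic vector space `(W, σ)` and a moving frame
`(E_a, E_b, E_c, F_a, F_b, F_c)` evolving by the structural equation (the
`E`-chain equations `E_a' = E_b`, `E_b' = F_b`, `E_c' = F_c`, as printed in the
paper with the typo `E_b' = E_c` for the tuple `E_c`, and the `F`-equations with
curvature data `R_t(a,a), R_t(a,c), R_t(b,b), R_t(b,c), R_t(c,c)`, the matrix
`R_t(c,c)` being symmetric), the Darboux-frame relations are preserved under the
flow: if the frame is a Darboux frame at `t = 0`, it is a Darboux frame for all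
`t`; in particular `Λ(t) = span{E_a(t), E_b(t), E_c(t)}` stays Lagrangian. -/
theorem darboux_frame_preserved {W : Type*} [NormedAddCommGroup W]
    [NormedSpace ℝ W] [FiniteDimensional ℝ W] {m : ℕ}
    (σ : LinearMap.BilinForm ℝ W)
    (hσ_alt : ∀ v w : W, σ v w = -σ w v)
    (hσ_nondeg : ∀ v : W, (∀ w : W, σ v w = 0) → v = 0)
    (Ea Eb Fa Fb : ℝ → W) (Ec Fc : ℝ → Fin m → W)
    (Raa Rbb : ℝ → ℝ) (Rac Rbc : ℝ → Fin m → ℝ)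
    (Rcc : ℝ → Matrix (Fin m) (Fin m) ℝ)
    (hRccSymm : ∀ t, (Rcc t).IsSymm)
    (hEa : ∀ t, HasDerivAt Ea (Eb t) t)
    (hEb : ∀ t, HasDerivAt Eb (Fb t) t)
    (hEc : ∀ i, ∀ t, HasDerivAt (fun s => Ec s i) (Fc t i) t)
    (hFa : ∀ t, HasDerivAt Fa
      (-(Raa t • Ea t) - ∑ i, Rac t i • Ec t i) t)
    (hFb : ∀ t, HasDerivAt Fb
      (-Fa t - Rbb t • Eb t - ∑ i, Rbc t i • Ec t i) t)
    (hFc : ∀ j, ∀ t, HasDerivAt (fun s => Fc s j)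
      (-(Rac t j • Ea t) - Rbc t j • Eb t - ∑ i, Rcc t i j • Ec t i) t)
    (h0 : IsDarbouxFrame σ (Ea 0) (Eb 0) (Fa 0) (Fb 0) (Ec 0) (Fc 0)) :
    ∀ t : ℝ, IsDarbouxFrame σ (Ea t) (Eb t) (Fa t) (Fb t) (Ec t) (Fc t) :=
  darboux_frame_preserved_general σ hσ_alt Ea Eb Fa Fb Ec Fc Raa Rbb Rac Rbc Rcc hRccSymm hEa hEb
    hEc hFa hFb hFc h0
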